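/- Let (Ω, μ) be a probability space and let z, z' : Ω → ℝ^d be square-integrable random vectors with E[z zᵀ] = E[z' z'ᵀ] entrywise. Assume additionally that for every nonzero v ∈ ℝ^d the event {⟨v, z − z'⟩ ≠ 0} has positive probability. Then the matrix Ā_z = E[z (z − z')ᵀ] is positive definite, i.e. vᵀ Ā_z v > 0 for every nonzero v ∈ ℝ^d. -/

import Mathlib

open MeasureTheory

private lemma memLp_mul_integrable {Ω : Type*} [MeasurableSpace Ω] {μ : Measure Ω}
    {f g : Ω → ℝ} (hf : MemLp f 2 μ) (hg : MemLp g 2 μ) :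
    Integrable (fun ω => f ω * g ω) μ := by
  have h : MemLp (f • g) 1 μ :=
    hg.smul hf (hpqr := ⟨by simp [one_div, ENNReal.inv_two_add_inv_two]⟩)
  exact memLp_one_iff_integrable.mp h

private lemma expand_aux {Ω : Type*} [MeasurableSpace Ω] (μ : Measure Ω)
    {d : ℕ} (v : Fin d → ℝ) (f g : Ω → Fin d → ℝ)
    (hfg : ∀ i j, Integrable (fun ω => f ω i * g ω j) μ) :
    ∫ ω, (∑ i, v i * f ω i) * (∑ j, v j * g ω j) ∂μ
      = ∑ i, ∑ j, v i * v j * ∫ ω, f ω i * g ω j ∂μ := by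
  have h1 : ∀ ω, (∑ i, v i * f ω i) * (∑ j, v j * g ω j)
      = ∑ i, ∑ j, (v i * v j) * (f ω i * g ω j) := by
    intro ω
    rw [Finset.sum_mul_sum]
    exact Finset.sum_congr rfl fun i _ => Finset.sum_congr rfl fun j _ => by ring
  simp_rw [h1]
  rw [integral_finset_sum _ (fun i _ => integrable_finset_sum _
    (fun j _ => (hfg i j).const_mul _))]
  refine Finset.sum_congr rfl fun i _ => ?_
  rw [integral_finset_sum _ (fun j _ => (hfg i j).const_mul _)]
  exact Finset.sum_congr rfl fun j _ => integral_const_mul _ _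

/-- On a probability space, if the square-integrable random vectors
`z, z' : Ω → ℝ^d` have equal second-moment matrices, and for all nonzero `v` the event
`{⟨v, z − z'⟩ ≠ 0}` has positive probability, then the matrix `Ā_z = E[z (z − z')ᵀ]`
is positive definite: `vᵀ Ā_z v > 0` for all nonzero `v`. -/
theorem posDef_of_second_moment_eq
    {Ω : Type*} [MeasurableSpace Ω] (μ : Measure Ω) [IsProbabilityMeasure μ]
    {d : ℕ} (z z' : Ω → Fin d → ℝ)
    (hz : ∀ i, MemLp (fun ω => z ω i) 2 μ)
    (hz' : ∀ i, MemLp (fun ω => z' ω i) 2 μ)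
    (hmom : ∀ i j, (∫ ω, z ω i * z ω j ∂μ) = ∫ ω, z' ω i * z' ω j ∂μ)
    (hnd : ∀ v : Fin d → ℝ, v ≠ 0 →
      0 < μ {ω | (∑ i, v i * (z ω i - z' ω i)) ≠ 0}) :
    ∀ v : Fin d → ℝ, v ≠ 0 →
      0 < ∑ i, ∑ j, v i * (∫ ω, z ω i * (z ω j - z' ω j) ∂μ) * v j := by
  intro v hv
  set X : Ω → ℝ := fun ω => ∑ i, v i * z ω i with hXdef
  set Y : Ω → ℝ := fun ω => ∑ i, v i * z' ω i with hYdef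
  have hXm : MemLp X 2 μ := by
    have h := memLp_finset_sum' (μ := μ) Finset.univ (fun i _ => (hz i).const_mul (v i))
    convert h using 1
    ext ω
    simp [Finset.sum_apply, hXdef]
  have hYm : MemLp Y 2 μ := by
    have h := memLp_finset_sum' (μ := μ) Finset.univ (fun i _ => (hz' i).const_mul (v i))
    convert h using 1
    ext ω
    simp [Finset.sum_apply, hYdef]
  have hint1 : ∀ i j, Integrable (fun ω => z ω i * z ω j) μ :=
    fun i j => memLp_mul_integrable (hz i) (hz j)
  have hint2 : ∀ i j, Integrable (fun ω => z ω i * z' ω j) μ :=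
    fun i j => memLp_mul_integrable (hz i) (hz' j)
  have hint3 : ∀ i j, Integrable (fun ω => z' ω i * z' ω j) μ :=
    fun i j => memLp_mul_integrable (hz' i) (hz' j)
  -- the three second-moment quadratic forms
  set a : ℝ := ∑ i, ∑ j, v i * v j * ∫ ω, z ω i * z ω j ∂μ with ha
  set b : ℝ := ∑ i, ∑ j, v i * v j * ∫ ω, z ω i * z' ω j ∂μ with hb
  set c : ℝ := ∑ i, ∑ j, v i * v j * ∫ ω, z' ω i * z' ω j ∂μ with hc
  have hac : a = c := by
    simp only [ha, hc]
    exact Finset.sum_congr rfl fun i _ => Finset.sum_congr rfl fun j _ => by rw [hmom]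
  have hXX : ∫ ω, X ω * X ω ∂μ = a := expand_aux μ v z z hint1
  have hXY : ∫ ω, X ω * Y ω ∂μ = b := expand_aux μ v z z' hint2
  have hYY : ∫ ω, Y ω * Y ω ∂μ = c := expand_aux μ v z' z' hint3
  -- the target equals a - b
  have htarget : (∑ i, ∑ j, v i * (∫ ω, z ω i * (z ω j - z' ω j) ∂μ) * v j) = a - b := by
    simp only [ha, hb, ← Finset.sum_sub_distrib]
    refine Finset.sum_congr rfl fun i _ => Finset.sum_congr rfl fun j _ => ?_
    have : ∫ ω, z ω i * (z ω j - z' ω j) ∂μ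
        = (∫ ω, z ω i * z ω j ∂μ) - ∫ ω, z ω i * z' ω j ∂μ := by
      rw [← integral_sub (hint1 i j) (hint2 i j)]
      exact integral_congr_ae (Filter.Eventually.of_forall fun ω => by ring)
    rw [this]; ring
  -- ∫ (X - Y)^2 = a - 2b + c = 2(a - b)
  have hXYm : MemLp (fun ω => X ω - Y ω) 2 μ := hXm.sub hYm
  have hsq_int : Integrable (fun ω => (X ω - Y ω) * (X ω - Y ω)) μ :=
    memLp_mul_integrable hXYm hXYm
  have hexp : ∫ ω, (X ω - Y ω) * (X ω - Y ω) ∂μ = a - 2 * b + c := by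
    have hpt : ∀ ω, (X ω - Y ω) * (X ω - Y ω)
        = X ω * X ω - (X ω * Y ω + Y ω * X ω) + Y ω * Y ω := fun ω => by ring
    have hYX : ∫ ω, Y ω * X ω ∂μ = b := by
      rw [← hXY]
      exact integral_congr_ae (Filter.Eventually.of_forall fun ω => by ring)
    simp_rw [hpt]
    rw [integral_add, integral_sub, integral_add, hXX, hXY, hYX, hYY]
    · ring
    · exact memLp_mul_integrable hXm hYm
    · exact memLp_mul_integrable hYm hXm
    · exact memLp_mul_integrable hXm hXm
    · exact (memLp_mul_integrable hXm hYm).add (memLp_mul_integrable hYm hXm)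
    · exact (memLp_mul_integrable hXm hXm).sub
        ((memLp_mul_integrable hXm hYm).add (memLp_mul_integrable hYm hXm))
    · exact memLp_mul_integrable hYm hYm
  -- positivity of ∫ (X - Y)^2
  have hpos : 0 < ∫ ω, (X ω - Y ω) * (X ω - Y ω) ∂μ := by
    rw [integral_pos_iff_support_of_nonneg (fun ω => mul_self_nonneg _) hsq_int]
    have hsupp : Function.support (fun ω => (X ω - Y ω) * (X ω - Y ω))
        = {ω | (∑ i, v i * (z ω i - z' ω i)) ≠ 0} := by
      ext ω
      have hdiff : X ω - Y ω = ∑ i, v i * (z ω i - z' ω i) := by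
        simp only [hXdef, hYdef, mul_sub, Finset.sum_sub_distrib]
      simp [Function.support, hdiff, mul_self_eq_zero]
    rw [hsupp]
    exact hnd v hv
  rw [htarget]
  have : a - 2 * b + c = 2 * (a - b) := by rw [← hac]; ring
  rw [this] at hexp
  linarith
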